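/- For any two 2-forms a, b on ℝ^(2n), their inner product satisfies ⟨a, b⟩ ≤ n · comass(a) · comass(b). -/

import Mathlib

open scoped BigOperators RealInnerProductSpace

/-- Comass of a k-form on a real inner product space: the supremum of |ω(v₁,…,v_k)|
over tuples of vectors of norm at most 1. -/
noncomputable def comass {E : Type*} [NormedAddCommGroup E] [InnerProductSpace ℝ E] {k : ℕ}
    (ω : E [⋀^Fin k]→ₗ[ℝ] ℝ) : ℝ :=
  sSup {r | ∃ v : Fin k → E, (∀ i, ‖v i‖ ≤ 1) ∧ r = |ω v|}

/-- Wedge product of real-valued alternating forms (shuffle convention, so that the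
wedge of dual basis covectors evaluates as a determinant). -/
noncomputable def wedge {E : Type*} [AddCommGroup E] [Module ℝ E] {p q : ℕ}
    (a : E [⋀^Fin p]→ₗ[ℝ] ℝ) (b : E [⋀^Fin q]→ₗ[ℝ] ℝ) :
    E [⋀^Fin (p + q)]→ₗ[ℝ] ℝ :=
  (TensorProduct.lid ℝ ℝ).toLinearMap.compAlternatingMap
    ((a.domCoprod b).domDomCongr finSumFinEquiv)

/-- The standard inner product of two k-forms on Euclidean n-space, for which the
increasing wedges of standard dual basis vectors are orthonormal. -/
noncomputable def formInner {n k : ℕ}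
    (a b : (EuclideanSpace ℝ (Fin n)) [⋀^Fin k]→ₗ[ℝ] ℝ) : ℝ :=
  (1 / (k.factorial : ℝ)) *
    ∑ f : Fin k → Fin n,
      a (fun i => EuclideanSpace.single (f i) 1) * b (fun i => EuclideanSpace.single (f i) 1)

/-- The standard volume form on Euclidean n-space. -/
noncomputable def vol (n : ℕ) : (EuclideanSpace ℝ (Fin n)) [⋀^Fin n]→ₗ[ℝ] ℝ :=
  (EuclideanSpace.basisFun (Fin n) ℝ).toBasis.det

/-! Expanding in the standard basis, `2 ⟨a, b⟩ = ∑ i, ∑ j, a(eᵢ, eⱼ) b(eᵢ, eⱼ)`, and the inner sum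
is `∑ j, f(eⱼ) g(eⱼ) = ⟪f♯, g♯⟫ ≤ ‖f‖ ‖g‖` for the interior products `f = ι_{eᵢ} a`, `g = ι_{eᵢ} b`.
By homogeneity, `‖ι_v ω‖ ≤ comass ω ‖v‖`, so each of the `2n` rows contributes at most
`comass a * comass b`. -/

theorem update_vecCons_one {α : Type*} (x y z : α) : Function.update ![x, y] 1 z = ![x, z] := by
  simp [Function.update_eq_iff]

section Comass

variable {E : Type*} [NormedAddCommGroup E] [InnerProductSpace ℝ E] {k : ℕ}

theorem AlternatingMap.apply_eq_sum_orthonormalBasis {ι : Type*} [Fintype ι]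
    (e : OrthonormalBasis ι ℝ E) (ω : E [⋀^Fin k]→ₗ[ℝ] ℝ) (v : Fin k → E) :
    ω v = ∑ r : Fin k → ι, (∏ i, ⟪e (r i), v i⟫) * ω (fun i => e (r i)) := by
  conv_lhs =>
    rw [show v = fun i => ∑ j, ⟪e j, v i⟫ • e j from funext fun i => (e.sum_repr' _).symm]
  exact (ω.toMultilinearMap.map_sum _).trans
    (Finset.sum_congr rfl fun r _ => ω.toMultilinearMap.map_smul_univ _ _)

theorem OrthonormalBasis.sum_apply_mul_apply_le {ι : Type*} [Fintype ι]
    (e : OrthonormalBasis ι ℝ E) [CompleteSpace E] (f g : StrongDual ℝ E) :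
    ∑ i, f (e i) * g (e i) ≤ ‖f‖ * ‖g‖ := by
  let x := (InnerProductSpace.toDual ℝ E).symm f
  let y := (InnerProductSpace.toDual ℝ E).symm g
  calc ∑ i, f (e i) * g (e i) = ∑ i, ⟪x, e i⟫ * ⟪e i, y⟫ := by
        simp only [x, y, real_inner_comm ((InnerProductSpace.toDual ℝ E).symm g) (e _),
          InnerProductSpace.toDual_symm_apply]
    _ = ⟪x, y⟫ := e.sum_inner_mul_inner x y
    _ ≤ ‖x‖ * ‖y‖ := real_inner_le_norm x y
    _ = ‖f‖ * ‖g‖ := by simp only [x, y, LinearIsometryEquiv.norm_map]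

variable [FiniteDimensional ℝ E]

theorem bddAbove_comass (ω : E [⋀^Fin k]→ₗ[ℝ] ℝ) :
    BddAbove {r | ∃ v : Fin k → E, (∀ i, ‖v i‖ ≤ 1) ∧ r = |ω v|} := by
  let e := stdOrthonormalBasis ℝ E
  refine ⟨∑ r : Fin k → _, |ω fun i => e (r i)|, ?_⟩
  rintro _ ⟨v, hv, rfl⟩
  rw [ω.apply_eq_sum_orthonormalBasis e]
  refine (Finset.abs_sum_le_sum_abs _ _).trans (Finset.sum_le_sum fun r _ => ?_)
  rw [abs_mul, Finset.abs_prod]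
  refine mul_le_of_le_one_left (abs_nonneg _) (Finset.prod_le_one (fun _ _ => abs_nonneg _)
    fun i _ => ?_)
  calc |⟪e (r i), v i⟫| ≤ ‖e (r i)‖ * ‖v i‖ := abs_real_inner_le_norm _ _
    _ ≤ 1 := by rw [e.norm_eq_one, one_mul]; exact hv i

theorem abs_le_comass (ω : E [⋀^Fin k]→ₗ[ℝ] ℝ) {v : Fin k → E} (hv : ∀ i, ‖v i‖ ≤ 1) :
    |ω v| ≤ comass ω :=
  le_csSup (bddAbove_comass ω) ⟨v, hv, rfl⟩

theorem comass_nonneg (ω : E [⋀^Fin k]→ₗ[ℝ] ℝ) : 0 ≤ comass ω :=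
  (abs_nonneg _).trans (abs_le_comass ω (v := 0) fun _ => by simp)

theorem abs_le_comass_mul_prod_norm (ω : E [⋀^Fin k]→ₗ[ℝ] ℝ) (v : Fin k → E) :
    |ω v| ≤ comass ω * ∏ i, ‖v i‖ := by
  by_cases hzero : ∃ i, v i = 0
  · obtain ⟨i, hi⟩ := hzero
    rw [ω.map_coord_zero i hi, abs_zero]
    exact mul_nonneg (comass_nonneg ω) (Finset.prod_nonneg fun _ _ => norm_nonneg _)
  have hnorm : ∀ i, ‖v i‖ ≠ 0 := fun i => norm_ne_zero_iff.mpr fun h => hzero ⟨i, h⟩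
  set u : Fin k → E := fun i => ‖v i‖⁻¹ • v i
  have hv : v = fun i => ‖v i‖ • u i := funext fun i => by
    simp only [u, smul_smul, mul_inv_cancel₀ (hnorm i), one_smul]
  have hu : ∀ i, ‖u i‖ ≤ 1 := fun i => by
    simp only [u, norm_smul, norm_inv, norm_norm, inv_mul_cancel₀ (hnorm i), le_refl]
  have hscale : ω v = (∏ i, ‖v i‖) * ω u := by
    conv_lhs => rw [hv]
    exact ω.toMultilinearMap.map_smul_univ _ _
  rw [hscale, abs_mul, abs_of_nonneg (Finset.prod_nonneg fun _ _ => norm_nonneg _), mul_comm]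
  exact mul_le_mul_of_nonneg_right (abs_le_comass ω hu)
    (Finset.prod_nonneg fun _ _ => norm_nonneg _)

theorem abs_le_comass_mul_norm_mul_norm (ω : E [⋀^Fin 2]→ₗ[ℝ] ℝ) (v w : E) :
    |ω ![v, w]| ≤ comass ω * ‖v‖ * ‖w‖ := by
  simpa [Fin.prod_univ_two, mul_assoc] using abs_le_comass_mul_prod_norm ω ![v, w]

noncomputable def AlternatingMap.interiorProduct (ω : E [⋀^Fin 2]→ₗ[ℝ] ℝ) (v : E) :
    StrongDual ℝ E :=
  LinearMap.mkContinuous (ω.toMultilinearMap.toLinearMap ![v, 0] 1) (comass ω * ‖v‖) fun w => by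
    simpa [update_vecCons_one] using abs_le_comass_mul_norm_mul_norm ω v w

theorem AlternatingMap.interiorProduct_apply (ω : E [⋀^Fin 2]→ₗ[ℝ] ℝ) (v w : E) :
    ω.interiorProduct v w = ω ![v, w] := by
  simp [interiorProduct, update_vecCons_one]

theorem AlternatingMap.norm_interiorProduct_le (ω : E [⋀^Fin 2]→ₗ[ℝ] ℝ) (v : E) :
    ‖ω.interiorProduct v‖ ≤ comass ω * ‖v‖ :=
  LinearMap.mkContinuous_norm_le _ (mul_nonneg (comass_nonneg ω) (norm_nonneg v)) _

theorem OrthonormalBasis.sum_mul_le_comass_mul_comass {ι : Type*} [Fintype ι]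
    (e : OrthonormalBasis ι ℝ E) (a b : E [⋀^Fin 2]→ₗ[ℝ] ℝ) (v : E) :
    ∑ j, a ![v, e j] * b ![v, e j] ≤ comass a * comass b * ‖v‖ ^ 2 := by
  calc ∑ j, a ![v, e j] * b ![v, e j]
      = ∑ j, a.interiorProduct v (e j) * b.interiorProduct v (e j) := by
        simp only [AlternatingMap.interiorProduct_apply]
    _ ≤ ‖a.interiorProduct v‖ * ‖b.interiorProduct v‖ := e.sum_apply_mul_apply_le _ _
    _ ≤ (comass a * ‖v‖) * (comass b * ‖v‖) :=
        mul_le_mul (a.norm_interiorProduct_le v) (b.norm_interiorProduct_le v) (norm_nonneg _)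
          (mul_nonneg (comass_nonneg a) (norm_nonneg v))
    _ = comass a * comass b * ‖v‖ ^ 2 := by ring

end Comass

theorem formInner_two_eq_sum_sum {N : ℕ} (a b : EuclideanSpace ℝ (Fin N) [⋀^Fin 2]→ₗ[ℝ] ℝ) :
    formInner a b = 1 / 2 * ∑ i, ∑ j,
      a ![EuclideanSpace.basisFun (Fin N) ℝ i, EuclideanSpace.basisFun (Fin N) ℝ j] *
        b ![EuclideanSpace.basisFun (Fin N) ℝ i, EuclideanSpace.basisFun (Fin N) ℝ j] := by
  rw [formInner, Nat.factorial_two, Nat.cast_two, ← Fintype.sum_prod_type',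
    ← (finTwoArrowEquiv (Fin N)).symm.sum_comp]
  congr 1
  refine Fintype.sum_congr _ _ fun p => ?_
  simp only [finTwoArrowEquiv_symm_apply, EuclideanSpace.basisFun_apply]
  congr <;> ext i <;> fin_cases i <;> rfl

theorem formInner_two_le {N : ℕ} (a b : EuclideanSpace ℝ (Fin N) [⋀^Fin 2]→ₗ[ℝ] ℝ) :
    formInner a b ≤ N / 2 * comass a * comass b := by
  let e := EuclideanSpace.basisFun (Fin N) ℝ
  calc formInner a b = 1 / 2 * ∑ i, ∑ j, a ![e i, e j] * b ![e i, e j] :=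
        formInner_two_eq_sum_sum a b
    _ ≤ 1 / 2 * ∑ i, comass a * comass b * ‖e i‖ ^ 2 := by
        gcongr with i
        exact e.sum_mul_le_comass_mul_comass a b (e i)
    _ = N / 2 * comass a * comass b := by
        simp only [e.norm_eq_one, one_pow, mul_one, Finset.sum_const, Finset.card_univ,
          Fintype.card_fin, nsmul_eq_mul]
        ring

/-- For any two 2-forms a, b on ℝ^(2n),
⟨a, b⟩ ≤ n · comass(a) · comass(b). -/
theorem formInner_le_comass (n : ℕ)
    (a b : (EuclideanSpace ℝ (Fin (2 * n))) [⋀^Fin 2]→ₗ[ℝ] ℝ) :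
    formInner a b ≤ n * comass a * comass b := by
  have h := formInner_two_le a b
  rwa [Nat.cast_mul, Nat.cast_two, mul_div_cancel_left₀ _ two_ne_zero] at h
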